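/- arXiv:2402.04144 — 2 statements merged into one kernel-verified Lean document; each statement's English description precedes it below -/
import Mathlib

section
/- Two n-tuples x, y ∈ (P^1)^n, each having at least three pairwise distinct entries and having all equal cross-ratios (i.e., cr(x_i,x_j,x_k,x_l) = cr(y_i,y_j,y_k,y_l) for every quadruple of indices where both sides are defined), are PGL_2-equivalent if and only if their incidence partitions coincide, where the incidence partition groups indices with equal entries. -/
/-!
A Möbius transformation can send any three distinct points of `ℙ¹` to any other three, and it
preserves cross-ratios. So if the incidence partitions agree and `x i, x j, x k` are distinct, the
`g` sending them to `y i, y j, y k` satisfies `cr(y i, y j; y k, g • x l) = cr(x i, x j; x k, x l)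
= cr(y i, y j; y k, y l)`, and a point is determined by its cross-ratio with three distinct points.
The converse is the injectivity of the action.
-/

open Matrix

/-- The Möbius action of `GL₂(K)` on `ℙ¹(K)`. -/
noncomputable def mobiusAct {K : Type*} [Field K] (g : GL (Fin 2) K) :
    Projectivization K (Fin 2 → K) → Projectivization K (Fin 2 → K) :=
  Projectivization.map (Matrix.toLin' (g : Matrix (Fin 2) (Fin 2) K))
    (by
      have h : Function.Injective ((g : Matrix (Fin 2) (Fin 2) K).mulVec) :=
        Matrix.mulVec_injective_iff_isUnit.2 g.isUnit
      intro u v huv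
      apply h
      simpa [Matrix.toLin'_apply] using huv)

/-- The determinant of chosen representatives of two points of `ℙ¹(K)`;
its vanishing expresses equality of the two points, and products of such
determinants express (denominator-cleared) cross-ratio identities. -/
noncomputable def detRep {K : Type*} [Field K]
    (p q : Projectivization K (Fin 2 → K)) : K :=
  p.rep 0 * q.rep 1 - p.rep 1 * q.rep 0

namespace Projectivization

variable {K : Type*} [Field K]

local notation "ℙ¹" => Projectivization K (Fin 2 → K)

lemma mobiusAct_eq_smul (g : GL (Fin 2) K) (p : ℙ¹) : mobiusAct g p = g • p := by
  induction p using ind with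
  | h v hv => rfl

lemma detRep_eq_det (p q : ℙ¹) : detRep p q = (of ![p.rep, q.rep]).det := by
  simp [detRep, det_fin_two]

lemma detRep_ne_zero_iff {p q : ℙ¹} : detRep p q ≠ 0 ↔ p ≠ q := by
  rw [← linearIndependent_pair_iff_ne, detRep_eq_det, ← isUnit_iff_ne_zero,
    ← isUnit_iff_isUnit_det, ← linearIndependent_rows_iff_isUnit]
  rfl

lemma detRep_pluecker (a b p q : ℙ¹) :
    detRep a p * detRep b q - detRep b p * detRep a q = detRep a b * detRep p q := by
  unfold detRep; ring

lemma eq_of_detRep_mul_eq {a b p q : ℙ¹} (hab : a ≠ b)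
    (h : detRep a p * detRep b q = detRep b p * detRep a q) : p = q := by
  by_contra hpq
  exact mul_ne_zero (detRep_ne_zero_iff.2 hab) (detRep_ne_zero_iff.2 hpq) (by
    rw [← detRep_pluecker, h, sub_self])

lemma exists_detRep_smul (g : GL (Fin 2) K) :
    ∃ c : ℙ¹ → K, ∀ p q,
      detRep (g • p) (g • q) = c p * c q * (g : Matrix (Fin 2) (Fin 2) K).det * detRep p q := by
  have hrep (p : ℙ¹) : ∃ a : K, (g • p).rep = a • (g : Matrix (Fin 2) (Fin 2) K) *ᵥ p.rep := by
    obtain ⟨a, ha⟩ :=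
      exists_smul_eq_mk_rep K (g • p.rep) ((smul_ne_zero_iff_ne g).2 p.rep_nonzero)
    refine ⟨a, ?_⟩
    conv_lhs => rw [← p.mk_rep, smul_mk, ← ha]
    rfl
  choose c hc using hrep
  refine ⟨c, fun p q => ?_⟩
  simp only [detRep, hc, Pi.smul_apply, smul_eq_mul, mulVec, dotProduct, Fin.sum_univ_two,
    det_fin_two]
  ring

/-- `cr(a, b; c, d) = cr(a', b'; c', d')` with denominators cleared, where
`cr(a, b; c, d) = (a - c)(b - d) / ((a - d)(b - c))`. -/
def CrossRatioEq (a b c d a' b' c' d' : ℙ¹) : Prop :=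
  detRep a c * detRep b d * (detRep a' d' * detRep b' c') =
    detRep a d * detRep b c * (detRep a' c' * detRep b' d')

lemma crossRatioEq_smul (g : GL (Fin 2) K) (a b c d : ℙ¹) :
    CrossRatioEq a b c d (g • a) (g • b) (g • c) (g • d) := by
  obtain ⟨s, hs⟩ := exists_detRep_smul g
  simp only [CrossRatioEq, hs]
  ring

lemma eq_of_crossRatioEq {a b c d a' b' c' d' d'' : ℙ¹}
    (h : CrossRatioEq a b c d a' b' c' d') (h' : CrossRatioEq a b c d a' b' c' d'')
    (hac : a ≠ c) (hbd : b ≠ d) (ha'b' : a' ≠ b') (hb'c' : b' ≠ c') : d' = d'' := by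
  refine eq_of_detRep_mul_eq ha'b' (mul_left_cancel₀ (mul_ne_zero (mul_ne_zero
    (detRep_ne_zero_iff.2 hac) (detRep_ne_zero_iff.2 hbd)) (detRep_ne_zero_iff.2 hb'c')) ?_)
  unfold CrossRatioEq at h h'
  linear_combination detRep b' d'' * h - detRep b' d' * h'

lemma smul_mk_eq_of_mulVec_eq {g : GL (Fin 2) K} {v : Fin 2 → K} (hv : v ≠ 0) {p : ℙ¹} {a : K}
    (h : (g : Matrix (Fin 2) (Fin 2) K) *ᵥ v = a • p.rep) : g • mk K v hv = p := by
  rw [smul_mk]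
  conv_rhs => rw [← p.mk_rep]
  exact (mk_eq_mk_iff' ..).2 ⟨a, h.symm⟩

lemma exists_smul_standard_triple_eq {p q r : ℙ¹} (hpq : p ≠ q) (hpr : p ≠ r) (hqr : q ≠ r) :
    ∃ g : GL (Fin 2) K, g • mk K ![1, 0] (by simp) = p ∧ g • mk K ![0, 1] (by simp) = q ∧
      g • mk K ![1, 1] (by simp) = r := by
  -- `α • p.rep + β • q.rep = detRep p q • r.rep`, so `M` sends `![1, 1]` to a representative of `r`
  set α := detRep r q
  set β := detRep p r
  let M : Matrix (Fin 2) (Fin 2) K := !![α * p.rep 0, β * q.rep 0; α * p.rep 1, β * q.rep 1]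
  have hdet : M.det = α * β * detRep p q := by
    simp only [M, det_fin_two_of, α, β, detRep]; ring
  have hM : M.det ≠ 0 := by
    rw [hdet]
    exact mul_ne_zero (mul_ne_zero (detRep_ne_zero_iff.2 hqr.symm) (detRep_ne_zero_iff.2 hpr))
      (detRep_ne_zero_iff.2 hpq)
  refine ⟨GeneralLinearGroup.mkOfDetNeZero M hM, smul_mk_eq_of_mulVec_eq _ (a := α) ?_,
    smul_mk_eq_of_mulVec_eq _ (a := β) ?_, smul_mk_eq_of_mulVec_eq _ (a := detRep p q) ?_⟩ <;>
  · ext i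
    fin_cases i <;> simp [M, α, β, detRep, mulVec, dotProduct, Fin.sum_univ_two] <;> ring

lemma exists_smul_triple_eq {p q r p' q' r' : ℙ¹} (hpq : p ≠ q) (hpr : p ≠ r) (hqr : q ≠ r)
    (hpq' : p' ≠ q') (hpr' : p' ≠ r') (hqr' : q' ≠ r') :
    ∃ g : GL (Fin 2) K, g • p = p' ∧ g • q = q' ∧ g • r = r' := by
  obtain ⟨g, rfl, rfl, rfl⟩ := exists_smul_standard_triple_eq hpq hpr hqr
  obtain ⟨g', rfl, rfl, rfl⟩ := exists_smul_standard_triple_eq hpq' hpr' hqr'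
  exact ⟨g' * g⁻¹, by simp only [mul_smul, inv_smul_smul, and_self]⟩

end Projectivization

open Projectivization

theorem equivalent_iff_same_incidence_partition_general {K : Type*} [Field K] (n : ℕ)
    (x y : Fin n → Projectivization K (Fin 2 → K))
    (hx3 : ∃ i j k : Fin n, x i ≠ x j ∧ x i ≠ x k ∧ x j ≠ x k)
    (hcr : ∀ i j k l : Fin n,
      detRep (x i) (x k) * detRep (x j) (x l) *
        (detRep (y i) (y l) * detRep (y j) (y k)) =
      detRep (x i) (x l) * detRep (x j) (x k) *
        (detRep (y i) (y k) * detRep (y j) (y l))) :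
    (∃ g : GL (Fin 2) K, ∀ i, mobiusAct g (x i) = y i) ↔
      (∀ i j, x i = x j ↔ y i = y j) := by
  simp only [mobiusAct_eq_smul]
  constructor
  · rintro ⟨g, hg⟩ i j
    rw [← hg i, ← hg j, smul_left_cancel_iff]
  · intro hxy
    obtain ⟨i, j, k, hij, hik, hjk⟩ := hx3
    have hy {a b : Fin n} (h : x a ≠ x b) : y a ≠ y b := mt (hxy a b).2 h
    obtain ⟨g, hgi, hgj, hgk⟩ := exists_smul_triple_eq hij hik hjk (hy hij) (hy hik) (hy hjk)
    refine ⟨g, fun l => ?_⟩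
    by_cases hjl : x j = x l
    · rw [← hjl, hgj, (hxy j l).1 hjl]
    · have hg := crossRatioEq_smul g (x i) (x j) (x k) (x l)
      rw [hgi, hgj, hgk] at hg
      exact (eq_of_crossRatioEq (hcr i j k l) hg hik hjl (hy hij) (hy hjk)).symm

/-- Two `n`-tuples of points of `ℙ¹`, each with at least three pairwise distinct
entries, whose cross-ratios agree for every quadruple of indices (expressed by the
denominator-cleared determinant identities), are `PGL₂`-equivalent if and only if
their incidence partitions coincide (i.e., entries of `x` coincide exactly when the
corresponding entries of `y` do). -/
theorem equivalent_iff_same_incidence_partition {K : Type*} [Field K] (n : ℕ)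
    (x y : Fin n → Projectivization K (Fin 2 → K))
    (hx3 : ∃ i j k : Fin n, x i ≠ x j ∧ x i ≠ x k ∧ x j ≠ x k)
    (hy3 : ∃ i j k : Fin n, y i ≠ y j ∧ y i ≠ y k ∧ y j ≠ y k)
    (hcr : ∀ i j k l : Fin n,
      detRep (x i) (x k) * detRep (x j) (x l) *
        (detRep (y i) (y l) * detRep (y j) (y k)) =
      detRep (x i) (x l) * detRep (x j) (x k) *
        (detRep (y i) (y k) * detRep (y j) (y l))) :
    (∃ g : GL (Fin 2) K, ∀ i, mobiusAct g (x i) = y i) ↔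
      (∀ i j, x i = x j ↔ y i = y j) :=
  equivalent_iff_same_incidence_partition_general n x y hx3 hcr
end

section
/- A phylogenetic tree with n leaves is determined by its collection of destination partitions: if two phylogenetic trees on the same labelled leaf set N have the same family of destination partitions (indexed by a bijection of their inner vertex sets), then they are isomorphic as labelled trees. -/
open SimpleGraph

/-- The destination set of a vertex `v` of a tree towards a neighbour `w`:
leaves lying in the connected component of `w` after removing `v`. -/
def destSet {V : Type*} [Fintype V] (G : SimpleGraph V) [DecidableRel G.Adj]
    (v w : V) : Set V :=
  {l | G.degree l = 1 ∧ ∃ (hl : l ≠ v) (hw : w ≠ v),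
    (G.induce {u : V | u ≠ v}).Reachable ⟨w, hw⟩ ⟨l, hl⟩}

/-- The destination partition of a vertex `v`, recorded as the family of subsets of
the label set `N` (pulled back along the leaf labelling `ℓ : N → V`) given by the
destination sets of `v` along its incident edges. -/
def destPartition {V N : Type*} [Fintype V] (G : SimpleGraph V) [DecidableRel G.Adj]
    (ℓ : N → V) (v : V) : Set (Set N) :=
  {S | ∃ w, G.Adj v w ∧ S = ℓ ⁻¹' destSet G v w}

/-!
Adjacency of a phylogenetic tree can be read off from its leaf labels and destination
partitions. A leaf `l` is adjacent to an inner vertex `v` iff `{l}` is a block at `v`: an inner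
neighbour `w` of `v` has at least two further branches, each containing a leaf, so the block of
`v` towards `w` has at least two leaves. Two inner vertices `u ≠ v` are adjacent iff some block at
`u` is the complement of a block at `v`: if they are not adjacent, these blocks must be the ones
pointing along the path between them, and a third branch at the inner vertex next to `v` on that
path yields a leaf in both blocks. Two leaves are adjacent iff there are no inner vertices. Hence
the bijection `ℓ' ∘ ℓ⁻¹` on leaves together with `φ` on inner vertices preserves adjacency.
-/

namespace SimpleGraph

variable {V : Type*} {G : SimpleGraph V}

lemma reachable_induce_iff {s : Set V} {a b : V} (ha : a ∈ s) (hb : b ∈ s) :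
    (G.induce s).Reachable ⟨a, ha⟩ ⟨b, hb⟩ ↔ ∃ p : G.Walk a b, ∀ x ∈ p.support, x ∈ s := by
  refine ⟨?_, fun ⟨p, hp⟩ => ⟨p.induce s hp⟩⟩
  rintro ⟨q⟩
  refine ⟨q.map (Embedding.induce s).toHom, fun x hx => ?_⟩
  obtain ⟨y, -, rfl⟩ := List.mem_map.mp (Walk.support_map _ q ▸ hx)
  exact y.2

lemma exists_adj_ne_of_degree_ne_one {v w : V} [Fintype (G.neighborSet w)]
    (hw : G.degree w ≠ 1) (hwv : G.Adj w v) : ∃ z, G.Adj w z ∧ z ≠ v := by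
  by_contra! h
  exact hw (degree_eq_one_iff_existsUnique_adj.mpr ⟨v, hwv, h⟩)

lemma exists_adj_ne_ne_of_three_le_degree {v : V} [Fintype (G.neighborSet v)]
    (hv : 3 ≤ G.degree v) (a b : V) : ∃ z, G.Adj v z ∧ z ≠ a ∧ z ≠ b := by
  classical
  by_contra! h
  have hsub : G.neighborFinset v ⊆ {a, b} := fun z hz => by
    have := h z ((mem_neighborFinset _ _ _).mp hz)
    grind
  have := (Finset.card_le_card hsub).trans Finset.card_le_two
  rw [card_neighborFinset_eq_degree] at this
  omega

/-- For a neighbour `w` of `v`, the component of `w` in `G - v`; `destSet G v w` is its set of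
leaves. -/
def branch (G : SimpleGraph V) (v w : V) : Set V := {x | ∃ p : G.Walk w x, v ∉ p.support}

lemma start_mem_branch {v w : V} (h : v ≠ w) : w ∈ G.branch v w :=
  ⟨.nil, by simpa using h⟩

lemma ne_of_mem_branch {v w x : V} (hx : x ∈ G.branch v w) : x ≠ v := by
  rintro rfl
  obtain ⟨p, hp⟩ := hx
  exact hp p.end_mem_support

lemma mem_branch_of_adj {v w x y : V} (hx : x ∈ G.branch v w) (hxy : G.Adj x y) (hy : y ≠ v) :
    y ∈ G.branch v w := by
  obtain ⟨p, hp⟩ := hx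
  exact ⟨p.concat hxy, by simp [Walk.support_concat, hp, hy.symm]⟩

lemma mem_branch_of_mem_support {v w x t : V} {p : G.Walk w x} (hp : v ∉ p.support)
    (ht : t ∈ p.support) : t ∈ G.branch v w := by
  classical
  exact ⟨p.takeUntil t ht, fun h => hp (p.support_takeUntil_subset_support ht h)⟩

lemma branch_subset_branch_of_notMem {u q v w : V} (hv : v ∈ G.branch u q)
    (hu : u ∉ G.branch v w) (hvw : G.Adj v w) : G.branch v w ⊆ G.branch u q := by
  rintro x ⟨p, hp⟩
  obtain ⟨r, hr⟩ := hv
  refine ⟨r.append (.cons hvw p), ?_⟩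
  simp only [Walk.support_append, Walk.support_cons, List.tail_cons, List.mem_append, not_or]
  exact ⟨hr, fun h => hu (mem_branch_of_mem_support hp h)⟩

lemma branch_eq_singleton_of_degree_eq_one {v w : V} [Fintype (G.neighborSet w)]
    (hvw : G.Adj v w) (hw : G.degree w = 1) : G.branch v w = {w} := by
  refine Set.eq_singleton_iff_unique_mem.mpr ⟨start_mem_branch hvw.ne, ?_⟩
  rintro x ⟨_ | ⟨hwd, q⟩, hp⟩
  · rfl
  · refine absurd ?_ hp
    rw [(degree_eq_one_iff_existsUnique_adj.mp hw).unique hvw.symm hwd]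
    simp

lemma Preconnected.exists_adj_mem_branch (hG : G.Preconnected) {v x : V} (hx : x ≠ v) :
    ∃ w, G.Adj v w ∧ x ∈ G.branch v w := by
  obtain ⟨p, hp⟩ := hG.exists_isPath v x
  obtain ⟨w, hvw, q, rfl⟩ := Walk.exists_eq_cons_of_ne hx.symm p
  exact ⟨w, hvw, q, ((Walk.cons_isPath_iff _ _).mp hp).2⟩

lemma IsAcyclic.eq_of_mem_branch (hG : G.IsAcyclic) {v w w' x : V} (hw : G.Adj v w)
    (hw' : G.Adj v w') (hx : x ∈ G.branch v w) (hx' : x ∈ G.branch v w') : w = w' := by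
  classical
  obtain ⟨p, hp⟩ := hx
  obtain ⟨p', hp'⟩ := hx'
  have hq : v ∉ (p.append p'.reverse).bypass.support := fun h => by
    have := (p.append p'.reverse).support_bypass_subset_support h
    simp only [Walk.support_append, Walk.support_reverse, List.mem_append] at this
    exact this.elim hp fun h => hp' (List.mem_reverse.mp (List.mem_of_mem_tail h))
  have := hG.eq_snd_of_adj_start ((p.append p'.reverse).bypass_isPath.cons (h := hw) hq) hw'
    (Walk.end_mem_support _)
  rw [Walk.snd_cons] at this
  exact this.symm

lemma IsAcyclic.branch_subset_branch (hG : G.IsAcyclic) {v w z : V} (hvw : G.Adj v w)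
    (hwz : G.Adj w z) (hzv : z ≠ v) : G.branch w z ⊆ G.branch v w :=
  branch_subset_branch_of_notMem (start_mem_branch hvw.ne)
    (fun h => hzv (hG.eq_of_mem_branch hwz hvw.symm h (start_mem_branch hvw.ne'))) hwz

lemma IsTree.mem_branch_iff_notMem_branch (hG : G.IsTree) {v w x : V} (hvw : G.Adj v w) :
    x ∈ G.branch v w ↔ x ∉ G.branch w v := by
  classical
  constructor
  · rintro ⟨p, hp⟩ ⟨q, hq⟩
    have hp' : v ∉ p.bypass.support := fun h => hp (p.support_bypass_subset_support h)
    have := hG.isAcyclic.subsingleton_path v x |>.elim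
      ⟨_, p.bypass_isPath.cons (h := hvw) hp'⟩ ⟨_, q.bypass_isPath⟩
    refine hq (q.support_bypass_subset_support ?_)
    rw [← Subtype.mk.inj this]
    simp
  · intro hx
    rcases eq_or_ne w x with rfl | hwx
    · exact start_mem_branch hvw.ne
    obtain ⟨P, hP⟩ := hG.connected.preconnected.exists_isPath w x
    obtain ⟨d, hwd, Q, rfl⟩ := Walk.exists_eq_cons_of_ne hwx P
    refine ⟨.cons hwd Q, fun hv => hx ?_⟩
    obtain rfl : v = d := by simpa using hG.isAcyclic.eq_snd_of_adj_start hP hvw.symm hv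
    exact ⟨Q, ((Walk.cons_isPath_iff _ _).mp hP).2⟩

section Finite

variable [Fintype V] [DecidableRel G.Adj] {u v w w' : V}

lemma IsAcyclic.exists_degree_eq_one_mem_branch (hG : G.IsAcyclic) (hvw : G.Adj v w) :
    ∃ l ∈ G.branch v w, G.degree l = 1 := by
  induction hn : (G.branch v w).ncard using Nat.strong_induction_on generalizing v w with
  | _ n ih =>
  by_cases hw : G.degree w = 1
  · exact ⟨w, start_mem_branch hvw.ne, hw⟩
  obtain ⟨z, hwz, hzv⟩ := exists_adj_ne_of_degree_ne_one hw hvw.symm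
  have hsub := hG.branch_subset_branch hvw hwz hzv
  have hlt : (G.branch w z).ncard < n := hn ▸ Set.ncard_lt_ncard
    ((Set.ssubset_iff_of_subset hsub).mpr
      ⟨w, start_mem_branch hvw.ne, fun h => ne_of_mem_branch h rfl⟩)
  obtain ⟨l, hl, hl1⟩ := ih _ hlt hwz rfl
  exact ⟨l, hsub hl, hl1⟩

/-- Here `p` is the neighbour of `v` towards `u` and `q` that of `u` towards `v`. Every branch at
`v` other than the one through `p` lies in the branch at `u` through `q`; since `v` has at least
two such branches, the complementary leaf sets force `w = p`. -/
lemma IsAcyclic.eq_of_forall_mem_branch_iff (hG : G.IsAcyclic) (hv : 3 ≤ G.degree v)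
    {p q : V} (hvw : G.Adj v w) (huw' : G.Adj u w') (hvp : G.Adj v p) (hup : u ∈ G.branch v p)
    (huq : G.Adj u q) (hvq : v ∈ G.branch u q)
    (hiff : ∀ x, G.degree x = 1 → (x ∈ G.branch v w ↔ x ∉ G.branch u w')) : w = p := by
  by_contra hwp
  have toward_v : ∀ z, G.Adj v z → z ≠ p → G.branch v z ⊆ G.branch u q := fun z hvz hzp =>
    branch_subset_branch_of_notMem hvq (fun h => hzp (hG.eq_of_mem_branch hvz hvp h hup)) hvz
  obtain ⟨w₂, hvw₂, hw₂w, hw₂p⟩ := exists_adj_ne_ne_of_three_le_degree hv w p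
  obtain ⟨a, ha, ha1⟩ := hG.exists_degree_eq_one_mem_branch hvw
  obtain ⟨c, hc, hc1⟩ := hG.exists_degree_eq_one_mem_branch hvw₂
  have hcw' : c ∈ G.branch u w' := by
    by_contra h
    exact hw₂w (hG.eq_of_mem_branch hvw₂ hvw hc ((hiff c hc1).mpr h))
  have hw'q : w' = q := hG.eq_of_mem_branch huw' huq hcw' (toward_v w₂ hvw₂ hw₂p hc)
  exact (hiff a ha1).mp ha (hw'q ▸ toward_v w hvw hwp ha)

lemma IsTree.adj_of_forall_mem_branch_iff (hG : G.IsTree)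
    (hdeg : ∀ x, G.degree x = 1 ∨ 3 ≤ G.degree x) (hv : 3 ≤ G.degree v) (hu : 3 ≤ G.degree u)
    (huv : u ≠ v) (hvw : G.Adj v w) (huw' : G.Adj u w')
    (hiff : ∀ x, G.degree x = 1 → (x ∈ G.branch v w ↔ x ∉ G.branch u w')) : G.Adj v u := by
  obtain ⟨p, hvp, hup⟩ := hG.connected.preconnected.exists_adj_mem_branch huv
  obtain ⟨q, huq, hvq⟩ := hG.connected.preconnected.exists_adj_mem_branch huv.symm
  obtain rfl := hG.isAcyclic.eq_of_forall_mem_branch_iff hv hvw huw' hvp hup huq hvq hiff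
  obtain rfl := hG.isAcyclic.eq_of_forall_mem_branch_iff hu huw' hvw huq hvq hvp hup
    fun x hx => by rw [hiff x hx, not_not]
  by_contra hvu
  have hwu : w ≠ u := fun h => hvu (h ▸ hvw)
  -- `w` is an inner vertex of the path from `v` to `u`; a leaf beyond its third neighbour
  -- lies both beyond `v → w` and beyond `u → w'`.
  obtain ⟨z, hwz, huz⟩ := hG.connected.preconnected.exists_adj_mem_branch hwu.symm
  have hzv : z ≠ v := by
    rintro rfl
    exact (hG.mem_branch_iff_notMem_branch hvw).mp hup huz
  have hw3 : 3 ≤ G.degree w := (hdeg w).resolve_left fun h =>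
    hzv ((degree_eq_one_iff_existsUnique_adj.mp h).unique hwz hvw.symm)
  obtain ⟨y, hwy, hyv, hyz⟩ := exists_adj_ne_ne_of_three_le_degree hw3 v z
  obtain ⟨d, hd, hd1⟩ := hG.isAcyclic.exists_degree_eq_one_mem_branch hwy
  have hdv : d ∈ G.branch v w := hG.isAcyclic.branch_subset_branch hvw hwy hyv hd
  have hdu : d ∈ G.branch u w' := branch_subset_branch_of_notMem
    (mem_branch_of_adj hvq hvw hwu) (fun h => hyz (hG.isAcyclic.eq_of_mem_branch hwy hwz h huz))
    hwy hd
  exact (hiff d hd1).mp hdv hdu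

lemma IsTree.adj_iff_of_degree_eq_one (hG : G.IsTree)
    (hdeg : ∀ x, G.degree x = 1 ∨ 3 ≤ G.degree x) (hu : G.degree u = 1) (hv : G.degree v = 1) :
    G.Adj u v ↔ u ≠ v ∧ IsEmpty {x // 3 ≤ G.degree x} := by
  refine ⟨fun huv => ⟨huv.ne, ⟨fun ⟨x, hx⟩ => ?_⟩⟩, fun ⟨huv, hI⟩ => ?_⟩
  · obtain ⟨w, huw, hxw⟩ := hG.connected.preconnected.exists_adj_mem_branch
      (show x ≠ u by rintro rfl; omega)
    obtain rfl := (degree_eq_one_iff_existsUnique_adj.mp hu).unique huw huv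
    rw [branch_eq_singleton_of_degree_eq_one huv hv, Set.mem_singleton_iff] at hxw
    rw [hxw] at hx
    omega
  · obtain ⟨w, huw, hvw⟩ := hG.connected.preconnected.exists_adj_mem_branch huv.symm
    have hw : G.degree w = 1 := (hdeg w).resolve_right fun h => hI.false ⟨w, h⟩
    rw [branch_eq_singleton_of_degree_eq_one huw hw, Set.mem_singleton_iff] at hvw
    exact hvw ▸ huw

lemma mem_destSet_iff {l : V} : l ∈ destSet G v w ↔ G.degree l = 1 ∧ l ∈ G.branch v w := by
  simp only [destSet, reachable_induce_iff]
  refine and_congr_right fun _ => ⟨fun ⟨_, _, p, hp⟩ => ⟨p, fun h => hp v h rfl⟩,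
    fun ⟨p, hp⟩ => ⟨ne_of_mem_branch ⟨p, hp⟩, ?_, p, fun x hx hxv => hp (hxv ▸ hx)⟩⟩
  rintro rfl
  exact hp p.start_mem_support

lemma destSet_eq_singleton_of_degree_eq_one (hvw : G.Adj v w) (hw : G.degree w = 1) :
    destSet G v w = {w} := by
  ext l
  rw [mem_destSet_iff, branch_eq_singleton_of_degree_eq_one hvw hw, Set.mem_singleton_iff]
  exact ⟨And.right, fun h => ⟨h ▸ hw, h⟩⟩

lemma IsAcyclic.destSet_nontrivial (hG : G.IsAcyclic) (hvw : G.Adj v w) (hw : 3 ≤ G.degree w) :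
    (destSet G v w).Nontrivial := by
  obtain ⟨z₁, hwz₁, hz₁v, -⟩ := exists_adj_ne_ne_of_three_le_degree hw v v
  obtain ⟨z₂, hwz₂, hz₂v, hz₂z₁⟩ := exists_adj_ne_ne_of_three_le_degree hw v z₁
  obtain ⟨l₁, hl₁, hl₁1⟩ := hG.exists_degree_eq_one_mem_branch hwz₁
  obtain ⟨l₂, hl₂, hl₂1⟩ := hG.exists_degree_eq_one_mem_branch hwz₂
  refine ⟨l₁, mem_destSet_iff.mpr ⟨hl₁1, hG.branch_subset_branch hvw hwz₁ hz₁v hl₁⟩,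
    l₂, mem_destSet_iff.mpr ⟨hl₂1, hG.branch_subset_branch hvw hwz₂ hz₂v hl₂⟩, ?_⟩
  rintro rfl
  exact hz₂z₁ (hG.eq_of_mem_branch hwz₂ hwz₁ hl₂ hl₁)

lemma IsAcyclic.eq_of_destSet_eq_singleton (hG : G.IsAcyclic)
    (hw : G.degree w = 1 ∨ 3 ≤ G.degree w) (hvw : G.Adj v w) {l : V}
    (hl : destSet G v w = {l}) : w = l := by
  rcases hw with hw | hw
  · rwa [destSet_eq_singleton_of_degree_eq_one hvw hw, Set.singleton_eq_singleton_iff] at hl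
  · exact absurd (hl ▸ hG.destSet_nontrivial hvw hw) Set.not_nontrivial_singleton

variable {N : Type*}

lemma image_preimage_destSet (ℓ : N ≃ {x : V // G.degree x = 1}) :
    (fun i => (ℓ i : V)) '' ((fun i => (ℓ i : V)) ⁻¹' destSet G v w) = destSet G v w :=
  Set.image_preimage_eq_of_subset fun l hl =>
    ⟨ℓ.symm ⟨l, (mem_destSet_iff.mp hl).1⟩, by simp⟩

lemma IsAcyclic.adj_iff_singleton_mem_destPartition (hG : G.IsAcyclic)
    (hdeg : ∀ x, G.degree x = 1 ∨ 3 ≤ G.degree x) (ℓ : N ≃ {x : V // G.degree x = 1}) (i : N) :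
    G.Adj v (ℓ i) ↔ {i} ∈ destPartition G (fun i => (ℓ i : V)) v := by
  refine ⟨fun h => ⟨ℓ i, h, ?_⟩, fun ⟨w, hvw, hS⟩ => ?_⟩
  · ext j
    simp [destSet_eq_singleton_of_degree_eq_one h (ℓ i).2, Subtype.coe_inj]
  · have hw : destSet G v w = {(ℓ i : V)} := by
      rw [← image_preimage_destSet ℓ, ← hS, Set.image_singleton]
    rwa [← hG.eq_of_destSet_eq_singleton (hdeg w) hvw hw]

lemma IsTree.adj_iff_exists_compl_mem_destPartition (hG : G.IsTree)
    (hdeg : ∀ x, G.degree x = 1 ∨ 3 ≤ G.degree x) (ℓ : N ≃ {x : V // G.degree x = 1})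
    (hu : 3 ≤ G.degree u) (hv : 3 ≤ G.degree v) :
    G.Adj u v ↔ u ≠ v ∧ ∃ S ∈ destPartition G (fun i => (ℓ i : V)) u,
      Sᶜ ∈ destPartition G (fun i => (ℓ i : V)) v := by
  refine ⟨fun huv => ⟨huv.ne, _, ⟨v, huv, rfl⟩, u, huv.symm, ?_⟩, ?_⟩
  · ext j
    simp [mem_destSet_iff, (ℓ j).2, hG.mem_branch_iff_notMem_branch huv.symm]
  · rintro ⟨huv, _, ⟨w, huw, rfl⟩, w', hvw', hc⟩
    refine hG.adj_of_forall_mem_branch_iff hdeg hu hv huv.symm huw hvw' fun x hx => ?_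
    have := Set.ext_iff.mp hc (ℓ.symm ⟨x, hx⟩)
    simp only [Set.mem_compl_iff, Set.mem_preimage, Equiv.apply_symm_apply, mem_destSet_iff,
      hx, true_and] at this
    tauto

end Finite

end SimpleGraph

/-- The adjacency of a phylogenetic tree with leaves `N` and inner vertices `I`, as recovered
from its destination partitions `P`. -/
def partitionAdj {N I : Type*} (P : I → Set (Set N)) : N ⊕ I → N ⊕ I → Prop
  | .inl i, .inl j => i ≠ j ∧ IsEmpty I
  | .inl i, .inr v => {i} ∈ P v
  | .inr v, .inl i => {i} ∈ P v
  | .inr u, .inr v => u ≠ v ∧ ∃ S ∈ P u, Sᶜ ∈ P v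

lemma partitionAdj_comp_equiv {N I J : Type*} (e : I ≃ J) (P : J → Set (Set N))
    (a b : N ⊕ I) :
    partitionAdj (P ∘ e) a b ↔
      partitionAdj P (Equiv.sumCongr (Equiv.refl N) e a) (Equiv.sumCongr (Equiv.refl N) e b) := by
  rcases a with i | u <;> rcases b with j | v <;>
    simp [partitionAdj, e.injective.ne_iff, e.isEmpty_congr]

namespace SimpleGraph

variable {V N : Type*} [Fintype V] {G : SimpleGraph V} [DecidableRel G.Adj]

variable (G) in
def leafInnerEquiv (hdeg : ∀ x, G.degree x = 1 ∨ 3 ≤ G.degree x)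
    (ℓ : N ≃ {x : V // G.degree x = 1}) : N ⊕ {x : V // 3 ≤ G.degree x} ≃ V :=
  (Equiv.sumCongr ℓ (Equiv.subtypeEquivRight fun x => by have := hdeg x; omega)).trans
    (Equiv.sumCompl fun x => G.degree x = 1)

lemma IsTree.adj_leafInnerEquiv_iff (hG : G.IsTree)
    (hdeg : ∀ x, G.degree x = 1 ∨ 3 ≤ G.degree x) (ℓ : N ≃ {x : V // G.degree x = 1})
    (a b : N ⊕ {x : V // 3 ≤ G.degree x}) :
    G.Adj (leafInnerEquiv G hdeg ℓ a) (leafInnerEquiv G hdeg ℓ b) ↔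
      partitionAdj (fun v : {x // 3 ≤ G.degree x} => destPartition G (fun i => (ℓ i : V)) v)
        a b := by
  rcases a with i | ⟨u, hu⟩ <;> rcases b with j | ⟨v, hv⟩
  · exact (hG.adj_iff_of_degree_eq_one hdeg (ℓ i).2 (ℓ j).2).trans
      (and_congr_left' (Subtype.coe_injective.ne_iff.trans ℓ.injective.ne_iff))
  · exact G.adj_comm _ _ |>.trans (hG.isAcyclic.adj_iff_singleton_mem_destPartition hdeg ℓ i)
  · exact hG.isAcyclic.adj_iff_singleton_mem_destPartition hdeg ℓ j
  · exact (hG.adj_iff_exists_compl_mem_destPartition hdeg ℓ hu hv).trans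
      (and_congr_left' Subtype.mk_eq_mk.not.symm)

end SimpleGraph

/-- A phylogenetic tree with labelled leaf set `N` is determined by its family of
destination partitions: if two such trees have the same destination partitions
(indexed by a bijection `φ` of their inner vertex sets), then they are isomorphic
as labelled trees, i.e. by an isomorphism respecting the leaf labellings. -/
theorem tree_determined_by_destination_partitions
    {V V' N : Type*} [Fintype V] [Fintype V']
    (G : SimpleGraph V) (G' : SimpleGraph V')
    [DecidableRel G.Adj] [DecidableRel G'.Adj]
    (hT : G.IsTree) (hT' : G'.IsTree)
    (hdeg : ∀ u, G.degree u = 1 ∨ 3 ≤ G.degree u)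
    (hdeg' : ∀ u, G'.degree u = 1 ∨ 3 ≤ G'.degree u)
    (ℓ : N ≃ {v : V // G.degree v = 1}) (ℓ' : N ≃ {v : V' // G'.degree v = 1})
    (φ : {v : V // 3 ≤ G.degree v} ≃ {v : V' // 3 ≤ G'.degree v})
    (hφ : ∀ v : {v : V // 3 ≤ G.degree v},
      destPartition G (fun i => (ℓ i : V)) (v : V) =
      destPartition G' (fun i => (ℓ' i : V')) (φ v : V')) :
    ∃ ψ : G ≃g G', ∀ i : N, ψ (ℓ i : V) = (ℓ' i : V') := by
  set e := leafInnerEquiv G hdeg ℓ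
  set e' := leafInnerEquiv G' hdeg' ℓ'
  have hP : (fun v : {v // 3 ≤ G'.degree v} => destPartition G' (fun i => (ℓ' i : V')) v) ∘ φ =
      fun v : {v // 3 ≤ G.degree v} => destPartition G (fun i => (ℓ i : V)) v :=
    funext fun v => (hφ v).symm
  refine ⟨⟨e.symm.trans ((Equiv.sumCongr (Equiv.refl N) φ).trans e'), fun {x y} => ?_⟩,
    fun i => ?_⟩
  · obtain ⟨a, rfl⟩ := e.surjective x
    obtain ⟨b, rfl⟩ := e.surjective y
    simp only [Equiv.trans_apply, Equiv.symm_apply_apply]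
    rw [hT'.adj_leafInnerEquiv_iff, hT.adj_leafInnerEquiv_iff, ← partitionAdj_comp_equiv, hP]
  · simp [e, e', leafInnerEquiv]
end
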